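/- If P is the uniform distribution on Y^X, i.e. P(f) = |Y|^{-n} for every f, then for every optimiser a and every result vector R ∈ Y^n one has P_a(R) = |Y|^{-n}; consequently all optimisers have the same expected performance under every performance measure. -/

import Mathlib

namespace NFL

/-- A (deterministic) optimiser on search space `Fin n` and range `Y`:
it assigns to every trace (list of pairs with pairwise distinct first
components) of length `< n` a next, unvisited search point. -/
structure Optimiser (n : ℕ) (Y : Type*) where
  next : List (Fin n × Y) → Fin n
  valid : ∀ T : List (Fin n × Y), T.length < n → (T.map Prod.fst).Nodup →
    next T ∉ T.map Prod.fst

variable {n : ℕ} {Y : Type*}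

/-- The trace generated after `k` steps by running optimiser `a`
on target function `f`, starting from the empty trace. -/
def runFrom (a : Optimiser n Y) (f : Fin n → Y) : ℕ → List (Fin n × Y)
  | 0 => []
  | k + 1 =>
      runFrom a f k ++ [(a.next (runFrom a f k), f (a.next (runFrom a f k)))]

/-- The result vector `T^y(a,f)`: its `i`-th entry (0-indexed) is the value
observed at step `i+1`, i.e. `f` applied to the point probed after `i` steps. -/
def resVec (a : Optimiser n Y) (f : Fin n → Y) (i : Fin n) : Y :=
  f (a.next (runFrom a f (i : ℕ)))

/-- A problem distribution: a probability distribution on `Y^X`. -/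
def IsProbDist [Fintype Y] (P : (Fin n → Y) → ℝ) : Prop :=
  (∀ f, 0 ≤ P f) ∧ ∑ f, P f = 1

/-- `P_a(R)`: the probability that optimiser `a` produces result vector `R`. -/
def resProb [Fintype Y] [DecidableEq Y] (P : (Fin n → Y) → ℝ)
    (a : Optimiser n Y) (R : Fin n → Y) : ℝ :=
  ∑ f ∈ Finset.univ.filter (fun f => resVec a f = R), P f

/-- Expected performance `M^P(a)` of optimiser `a` under distribution `P`
and performance measure `M`. -/
def perf [Fintype Y] (P : (Fin n → Y) → ℝ) (M : (Fin n → Y) → ℝ)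
    (a : Optimiser n Y) : ℝ :=
  ∑ f, P f * M (resVec a f)

/-- NFL holds for `P`: all optimisers have the same expected performance
under every (nonnegative) performance measure. -/
def NFLholds [Fintype Y] (P : (Fin n → Y) → ℝ) : Prop :=
  ∀ M : (Fin n → Y) → ℝ, (∀ R, 0 ≤ M R) →
    ∀ a b : Optimiser n Y, perf P M a = perf P M b

/-- The histogram of `f`: `h_f(y) = |f⁻¹(y)|`. -/
def histogram [DecidableEq Y] (f : Fin n → Y) (y : Y) : ℕ :=
  (Finset.univ.filter fun x => f x = y).card

/-- `P` is block uniform: functions with equal histograms get equal probability. -/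
def BlockUniform [DecidableEq Y] (P : (Fin n → Y) → ℝ) : Prop :=
  ∀ f g : Fin n → Y, histogram f = histogram g → P f = P g

/-- `F` is closed under permutation: `f ∈ F` implies `σf ∈ F`,
where `(σf)(x) = f(σ⁻¹(x))`. -/
def Cup [Fintype Y] [DecidableEq Y] (F : Finset (Fin n → Y)) : Prop :=
  ∀ f ∈ F, ∀ σ : Equiv.Perm (Fin n), (f ∘ σ.symm) ∈ F

/-- The uniform distribution on a class `F`. -/
noncomputable def uniformOn [Fintype Y] [DecidableEq Y] (F : Finset (Fin n → Y))
    (f : Fin n → Y) : ℝ :=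
  if f ∈ F then 1 / F.card else 0

/-- An optimiser is non-adaptive if it probes the points of `X` in a fixed
order, regardless of the observed values. -/
def NonAdaptive (a : Optimiser n Y) : Prop :=
  ∃ ord : Fin n → Fin n,
    ∀ (f : Fin n → Y) (i : Fin n), a.next (runFrom a f (i : ℕ)) = ord i

/-- Optimisation time `M_ptm(R)`: the least index `i` (counting from 1) with
`R[i] = yMax`, with the convention `M_ptm(R) = n` if no such index exists. -/
def mptm [DecidableEq Y] (yMax : Y) (R : Fin n → Y) : ℕ :=
  if h : ∃ i, R i = yMax then
    ((Finset.univ.filter fun i => R i = yMax).min'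
      ⟨h.choose, Finset.mem_filter.mpr ⟨Finset.mem_univ _, h.choose_spec⟩⟩).val + 1
  else n

/-!
The result-vector map `f ↦ T^y(a,f)` is injective: by induction on the step, two target
functions with the same result vector give the same trace, and the full trace probes every
point and records the value of the target function there. On the finite set `Y^X` it is
therefore a bijection, so it carries the uniform distribution to the uniform distribution on
result vectors, and every expected performance is the average of `M` over `Y^n`.
-/

section Run

variable (a : Optimiser n Y) (f : Fin n → Y)

lemma length_runFrom (k : ℕ) : (runFrom a f k).length = k := by
  induction k with
  | zero => rfl
  | succ k ih => simp [runFrom, ih]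

lemma snd_eq_of_mem_runFrom {k : ℕ} {p : Fin n × Y} (hp : p ∈ runFrom a f k) :
    p.2 = f p.1 := by
  induction k with
  | zero => simp [runFrom] at hp
  | succ k ih =>
    simp only [runFrom, List.mem_append, List.mem_singleton] at hp
    rcases hp with hp | rfl
    · exact ih hp
    · rfl

lemma nodup_map_fst_runFrom {k : ℕ} (hk : k ≤ n) : ((runFrom a f k).map Prod.fst).Nodup := by
  induction k with
  | zero => simp [runFrom]
  | succ k ih =>
    have hnd := ih (by omega)
    have hfresh := a.valid (runFrom a f k) (by rw [length_runFrom]; omega) hnd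
    simp only [runFrom, List.map_append, List.map_cons, List.map_nil, List.nodup_append,
      List.mem_singleton]
    exact ⟨hnd, List.nodup_singleton _, by rintro x hx _ rfl rfl; exact hfresh hx⟩

lemma mem_map_fst_runFrom_self (x : Fin n) : x ∈ (runFrom a f n).map Prod.fst := by
  have hnd := nodup_map_fst_runFrom a f le_rfl
  have hall : ((runFrom a f n).map Prod.fst).toFinset = Finset.univ := by
    apply Finset.eq_univ_of_card
    rw [List.toFinset_card_of_nodup hnd, List.length_map, length_runFrom, Fintype.card_fin]
  rw [← List.mem_toFinset, hall]
  exact Finset.mem_univ x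

lemma runFrom_eq_of_resVec_eq {g : Fin n → Y} (h : resVec a f = resVec a g) {k : ℕ}
    (hk : k ≤ n) : runFrom a f k = runFrom a g k := by
  induction k with
  | zero => rfl
  | succ k ih =>
    have hrun := ih (by omega)
    have hval : f (a.next (runFrom a f k)) = g (a.next (runFrom a g k)) :=
      congrFun h ⟨k, by omega⟩
    simp only [runFrom, hrun, ← hval]

end Run

lemma resVec_injective (a : Optimiser n Y) : Function.Injective (resVec a) := by
  intro f g h
  funext x
  obtain ⟨p, hp, rfl⟩ := List.mem_map.mp (mem_map_fst_runFrom_self a f x)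
  have hpg : p ∈ runFrom a g n := runFrom_eq_of_resVec_eq a f h le_rfl ▸ hp
  rw [← snd_eq_of_mem_runFrom a f hp, snd_eq_of_mem_runFrom a g hpg]

lemma resVec_bijective [Finite Y] (a : Optimiser n Y) : Function.Bijective (resVec a) :=
  (resVec_injective a).bijective_of_finite

section Distribution

variable [Fintype Y] (P : (Fin n → Y) → ℝ) (a : Optimiser n Y)

lemma resProb_eq_of_resVec_eq [DecidableEq Y] {f : Fin n → Y} {R : Fin n → Y}
    (hf : resVec a f = R) : resProb P a R = P f := by
  have hfiber : Finset.univ.filter (fun g => resVec a g = R) = {f} := by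
    ext g
    simp [← hf, (resVec_injective a).eq_iff]
  rw [resProb, hfiber, Finset.sum_singleton]

lemma perf_eq_mul_sum_of_const {c : ℝ} (hP : ∀ f, P f = c) (M : (Fin n → Y) → ℝ) :
    perf P M a = c * ∑ R, M R := by
  simp only [perf, hP, ← Finset.mul_sum]
  rw [Fintype.sum_bijective (resVec a) (resVec_bijective a) _ M fun _ => rfl]

end Distribution

theorem uniform_nfl_general {n : ℕ} {Y : Type*} [Fintype Y] [DecidableEq Y]
    (P : (Fin n → Y) → ℝ)
    (hunif : ∀ f : Fin n → Y, P f = 1 / (Fintype.card Y : ℝ) ^ n) :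
    (∀ (a : Optimiser n Y) (R : Fin n → Y),
        resProb P a R = 1 / (Fintype.card Y : ℝ) ^ n) ∧
      ∀ M : (Fin n → Y) → ℝ, (∀ R, 0 ≤ M R) →
        ∀ a b : Optimiser n Y, perf P M a = perf P M b := by
  refine ⟨fun a R => ?_, fun M _ a b => ?_⟩
  · obtain ⟨f, hf⟩ := (resVec_bijective a).surjective R
    rw [resProb_eq_of_resVec_eq P a hf, hunif]
  · rw [perf_eq_mul_sum_of_const P a hunif, perf_eq_mul_sum_of_const P b hunif]

theorem uniform_nfl {n : ℕ} {Y : Type*} [Fintype Y] [DecidableEq Y]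
    (hn : 1 ≤ n) (hY : 2 ≤ Fintype.card Y)
    (P : (Fin n → Y) → ℝ) (hP : IsProbDist P)
    (hunif : ∀ f : Fin n → Y, P f = 1 / (Fintype.card Y : ℝ) ^ n) :
    (∀ (a : Optimiser n Y) (R : Fin n → Y),
        resProb P a R = 1 / (Fintype.card Y : ℝ) ^ n) ∧
      ∀ M : (Fin n → Y) → ℝ, (∀ R, 0 ≤ M R) →
        ∀ a b : Optimiser n Y, perf P M a = perf P M b :=
  uniform_nfl_general P hunif

end NFL
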